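/- arXiv:1311.1931 — 4 statements merged into one kernel-verified Lean document; each statement's English description precedes it below -/
import Mathlib

section
/- Let q be a positive integer and let ν₁,…,ν_q be positive integers (each ≥ 2) satisfying: (A) for every proper subset I of {1,…,q}, ∑_{j∈I}(1 - 1/ν_j) ≤ m+2, and (B) there is no tuple of positive integers (ν*₁,…,ν*_q) distinct from (ν₁,…,ν_q) with ν*_j ≤ ν_j for all j and ∑_{j=1}^q (1 - 1/ν*_j) > m+2, and ∑_{j=1}^q (1 - 1/ν_j) > m+2. If the ν_j are ordered increasingly, then γ - (m+2) ≤ 1/(ν_q(ν_q - 1)), where γ = ∑_{j=1}^q (1 - 1/ν_j). -/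
open Finset

/-! Lowering the largest index `ν_q` by one produces a tuple `ν' ≤ ν`, `ν' ≠ ν`, so by minimality
its ramification sum is at most `m + 2`; and the two sums differ by exactly
`1/(ν_q - 1) - 1/ν_q = 1/(ν_q (ν_q - 1))`. -/

lemma one_sub_inv_sub_one_sub_inv_pred {a : ℕ} (ha : 2 ≤ a) :
    (1 - 1 / (a : ℝ)) - (1 - 1 / ((a - 1 : ℕ) : ℝ)) = 1 / ((a : ℝ) * ((a : ℝ) - 1)) := by
  have ha' : (2 : ℝ) ≤ a := by exact_mod_cast ha
  rw [Nat.cast_sub (by omega), Nat.cast_one]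
  field_simp [show (a : ℝ) - 1 ≠ 0 by linarith]
  ring

lemma sum_comp_sub_sum_comp_update {ι α M : Type*} [Fintype ι] [DecidableEq ι] [AddCommGroup M]
    (g : α → M) (f : ι → α) (i : ι) (b : α) :
    ∑ j, g (f j) - ∑ j, g (Function.update f i b j) = g (f i) - g b := by
  simp_rw [← Function.comp_apply (f := g), Function.comp_update]
  rw [sum_update_of_mem (mem_univ i), sum_eq_add_sum_sdiff_singleton_of_mem (mem_univ i)]
  simp only [Function.comp_apply]
  abel

lemma update_pred_pos_and_le {ι : Type*} [DecidableEq ι] {ν : ι → ℕ} {i : ι}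
    (hpos : ∀ j, 0 < ν j) (hi : 2 ≤ ν i) (j : ι) :
    0 < Function.update ν i (ν i - 1) j ∧ Function.update ν i (ν i - 1) j ≤ ν j := by
  rcases eq_or_ne j i with rfl | hj
  · simp only [Function.update_self]
    omega
  · simp only [Function.update_of_ne hj, hpos j, le_refl, and_self]

theorem gamma_sub_le_inv_last_mul_pred_general
    (m : ℕ) (n : ℕ) (ν : Fin (n + 1) → ℕ)
    (h2 : ∀ j, 2 ≤ ν j)
    (hB : ¬ ∃ ν' : Fin (n + 1) → ℕ, ν' ≠ ν ∧ (∀ j, 0 < ν' j ∧ ν' j ≤ ν j) ∧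
      (m : ℝ) + 2 < ∑ j, (1 - 1 / (ν' j : ℝ))) :
    (∑ j, (1 - 1 / (ν j : ℝ))) - ((m : ℝ) + 2) ≤
      1 / ((ν (Fin.last n) : ℝ) * ((ν (Fin.last n) : ℝ) - 1)) := by
  set q := Fin.last n
  set ν' := Function.update ν q (ν q - 1)
  have hne : ν' ≠ ν := by
    rw [Ne, Function.update_eq_self_iff]
    have := h2 q
    omega
  have hle : ∀ j, 0 < ν' j ∧ ν' j ≤ ν j :=
    update_pred_pos_and_le (fun j ↦ zero_lt_two.trans_le (h2 j)) (h2 q)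
  have hsum' : ∑ j, (1 - 1 / (ν' j : ℝ)) ≤ (m : ℝ) + 2 :=
    not_lt.mp fun h ↦ hB ⟨ν', hne, hle, h⟩
  have hdiff := sum_comp_sub_sum_comp_update (fun k : ℕ ↦ 1 - 1 / (k : ℝ)) ν q (ν q - 1)
  rw [one_sub_inv_sub_one_sub_inv_pred (h2 q)] at hdiff
  linarith

/-- under the minimality conditions (A) and (B) on a nondecreasing tuple of
ramification indices `ν j ≥ 2` with `γ = ∑ (1 - 1/ν j) > m + 2`, one has
`γ - (m+2) ≤ 1/(ν_q (ν_q - 1))`. -/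
theorem gamma_sub_le_inv_last_mul_pred
    (m : ℕ) (hm : 0 < m) (n : ℕ) (ν : Fin (n + 1) → ℕ)
    (h2 : ∀ j, 2 ≤ ν j) (hmono : Monotone ν)
    (hA : ∀ I : Finset (Fin (n + 1)), I ≠ Finset.univ →
      ∑ j ∈ I, (1 - 1 / (ν j : ℝ)) ≤ (m : ℝ) + 2)
    (hB : ¬ ∃ ν' : Fin (n + 1) → ℕ, ν' ≠ ν ∧ (∀ j, 0 < ν' j ∧ ν' j ≤ ν j) ∧
      (m : ℝ) + 2 < ∑ j, (1 - 1 / (ν' j : ℝ)))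
    (hγ : (m : ℝ) + 2 < ∑ j, (1 - 1 / (ν j : ℝ))) :
    (∑ j, (1 - 1 / (ν j : ℝ))) - ((m : ℝ) + 2) ≤
      1 / ((ν (Fin.last n) : ℝ) * ((ν (Fin.last n) : ℝ) - 1)) :=
  gamma_sub_le_inv_last_mul_pred_general m n ν h2 hB
end

section
/- Fix a positive integer m. There exist only finitely many tuples (q, ν₁,…,ν_q) of integers with each ν_j ≥ 2, ν₁ ≤ … ≤ ν_q, such that ∑_{j=1}^q (1 - 1/ν_j) > m+2, and which satisfy: (A) for every proper subset I of {1,…,q}, ∑_{j∈I}(1 - 1/ν_j) ≤ m+2, and (B) no tuple (ν*₁,…,ν*_q) ≠ (ν₁,…,ν_q) of positive integers with ν*_j ≤ ν_j for all j satisfies ∑(1 - 1/ν*_j) > m+2. -/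
/-!
Removing one index from a tuple satisfying (A) leaves a proper subfamily, each of whose terms
`1 - 1/ν_j` is at least `1/2`; hence `q ≤ 2m + 5`. For each fixed `q`, condition (B) says that
`ν` is a minimal element of `{ν | ∑ (1 - 1/ν_j) > m + 2}` in `ℕ^q`, and minimal elements form an
antichain, which is finite by Dickson's lemma.
-/

open Finset

theorem Set.Finite.of_sigma {ι : Type*} {β : ι → Type*} {s : Set (Σ i, β i)}
    (hfst : (Sigma.fst '' s).Finite) (hfib : ∀ i, {b | (⟨i, b⟩ : Σ i, β i) ∈ s}.Finite) :
    s.Finite :=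
  Set.Finite.of_finite_fibers Sigma.fst hfst fun i _ =>
    ((hfib i).image (Sigma.mk i)).subset (by rintro ⟨j, b⟩ ⟨hb, rfl⟩; exact ⟨b, hb, rfl⟩)

section RamificationSum

variable {ι : Type*} {ν : ι → ℕ}

theorem card_div_two_le_sum_one_sub_inv (s : Finset ι) (h2 : ∀ j ∈ s, 2 ≤ ν j) :
    (#s : ℝ) / 2 ≤ ∑ j ∈ s, (1 - 1 / (ν j : ℝ)) := by
  have hterm : ∀ j ∈ s, (1 / 2 : ℝ) ≤ 1 - 1 / (ν j : ℝ) := by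
    intro j hj
    have : 1 / (ν j : ℝ) ≤ 1 / 2 :=
      one_div_le_one_div_of_le two_pos (by exact_mod_cast h2 j hj)
    linarith
  calc (#s : ℝ) / 2 = ∑ _j ∈ s, (1 / 2 : ℝ) := by rw [sum_const, nsmul_eq_mul, mul_one_div]
    _ ≤ _ := sum_le_sum hterm

theorem card_le_of_sum_le_of_ne_univ [Fintype ι] [DecidableEq ι] [Nonempty ι] {c : ℝ}
    (h2 : ∀ j, 2 ≤ ν j)
    (hA : ∀ I : Finset ι, I ≠ univ → ∑ j ∈ I, (1 - 1 / (ν j : ℝ)) ≤ c) :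
    (Fintype.card ι : ℝ) ≤ 2 * c + 1 := by
  obtain ⟨j₀⟩ := ‹Nonempty ι›
  have hproper : univ.erase j₀ ≠ univ := (erase_ssubset (mem_univ j₀)).ne
  have hcard : (#(univ.erase j₀) : ℝ) = Fintype.card ι - 1 := by
    rw [card_erase_of_mem (mem_univ j₀), card_univ, Nat.cast_pred Fintype.card_pos]
  have := (card_div_two_le_sum_one_sub_inv _ fun j _ => h2 j).trans (hA _ hproper)
  rw [hcard] at this
  linarith

theorem minimal_sum_gt_of_not_exists_le [Fintype ι] {c : ℝ} (hpos : ∀ j, 0 < ν j)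
    (hsum : c < ∑ j, (1 - 1 / (ν j : ℝ)))
    (hB : ¬ ∃ ν' : ι → ℕ, ν' ≠ ν ∧ (∀ j, 0 < ν' j ∧ ν' j ≤ ν j) ∧
      c < ∑ j, (1 - 1 / (ν' j : ℝ))) :
    Minimal (fun ν' : ι → ℕ => (∀ j, 0 < ν' j) ∧ c < ∑ j, (1 - 1 / (ν' j : ℝ))) ν := by
  refine ⟨⟨hpos, hsum⟩, fun ν' ⟨hpos', hsum'⟩ hle => ?_⟩
  by_contra hne
  exact hB ⟨ν', fun h => hne (h ▸ le_rfl), fun j => ⟨hpos' j, hle j⟩, hsum'⟩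

theorem finite_setOf_minimal_sum_gt [Fintype ι] (c : ℝ) :
    {ν : ι → ℕ | (∀ j, 0 < ν j) ∧ c < ∑ j, (1 - 1 / (ν j : ℝ)) ∧
      ¬ ∃ ν' : ι → ℕ, ν' ≠ ν ∧ (∀ j, 0 < ν' j ∧ ν' j ≤ ν j) ∧
        c < ∑ j, (1 - 1 / (ν' j : ℝ))}.Finite :=
  (WellQuasiOrderedLE.finite_of_isAntichain (setOfPred_minimal_antichain _)).subset
    fun _ ⟨hpos, hsum, hB⟩ => minimal_sum_gt_of_not_exists_le hpos hsum hB

end RamificationSum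

theorem finitely_many_minimal_ramification_tuples_general (m : ℕ) :
    Set.Finite {p : Σ q : ℕ, Fin q → ℕ |
      (∀ j, 2 ≤ p.2 j) ∧ Monotone p.2 ∧
      ((m : ℝ) + 2 < ∑ j, (1 - 1 / (p.2 j : ℝ))) ∧
      (∀ I : Finset (Fin p.1), I ≠ Finset.univ →
        ∑ j ∈ I, (1 - 1 / (p.2 j : ℝ)) ≤ (m : ℝ) + 2) ∧
      ¬ ∃ ν' : Fin p.1 → ℕ, ν' ≠ p.2 ∧ (∀ j, 0 < ν' j ∧ ν' j ≤ p.2 j) ∧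
        (m : ℝ) + 2 < ∑ j, (1 - 1 / (ν' j : ℝ))} := by
  refine Set.Finite.of_sigma ((Set.finite_Iic (2 * m + 5)).subset ?_) fun q =>
    (finite_setOf_minimal_sum_gt ((m : ℝ) + 2)).subset ?_
  · rintro _ ⟨⟨q, ν⟩, ⟨h2, -, hsum, hA, -⟩, rfl⟩
    have : Nonempty (Fin q) := univ_nonempty_iff.mp <| nonempty_of_sum_ne_zero <|
      ((by positivity : (0 : ℝ) < m + 2).trans hsum).ne'
    have hq := card_le_of_sum_le_of_ne_univ h2 hA
    rw [Fintype.card_fin] at hq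
    exact_mod_cast (show (q : ℝ) ≤ 2 * m + 5 by linarith)
  · rintro ν ⟨h2, -, hsum, -, hB⟩
    exact ⟨fun j => two_pos.trans_le (h2 j), hsum, hB⟩

/-- Lemma 3: for fixed `m`, there are only finitely many tuples
`(q, ν₁ ≤ … ≤ ν_q)` of integers `ν_j ≥ 2` with `∑ (1 - 1/ν_j) > m + 2` satisfying the
minimality conditions (A) and (B). -/
theorem finitely_many_minimal_ramification_tuples (m : ℕ) (hm : 0 < m) :
    Set.Finite {p : Σ q : ℕ, Fin q → ℕ |
      (∀ j, 2 ≤ p.2 j) ∧ Monotone p.2 ∧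
      ((m : ℝ) + 2 < ∑ j, (1 - 1 / (p.2 j : ℝ))) ∧
      (∀ I : Finset (Fin p.1), I ≠ Finset.univ →
        ∑ j ∈ I, (1 - 1 / (p.2 j : ℝ)) ≤ (m : ℝ) + 2) ∧
      ¬ ∃ ν' : Fin p.1 → ℕ, ν' ≠ p.2 ∧ (∀ j, 0 < ν' j ∧ ν' j ≤ p.2 j) ∧
        (m : ℝ) + 2 < ∑ j, (1 - 1 / (ν' j : ℝ))} :=
  finitely_many_minimal_ramification_tuples_general m
end

section
/- Let m ≥ 2 be an even integer, let α₁,…,α_{m/2} ∈ ℂ∖{0,±1} be distinct with α_i ≠ 1/α_j for all i,j, let Σ = ℂ∖({0} ∪ {α_i} ∪ {1/α_i}), and let ω = dz/(z·∏_{i=1}^{m/2}(z−α_i)(α_i z−1)), g(z) = z. Then the conformal metric ds² = (1+|g|²)^m |ω|² on Σ is complete. -/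
open Set

/-- A curve `c : [0,∞) → ℂ` is a divergent curve in the open set `U`: it stays in `U`,
is continuous, and eventually leaves every compact subset of `U`. -/
def IsDivergentCurve (U : Set ℂ) (c : ℝ → ℂ) : Prop :=
  (∀ t, 0 ≤ t → c t ∈ U) ∧ ContinuousOn c (Set.Ici 0) ∧
  ∀ K : Set ℂ, K ⊆ U → IsCompact K → ∃ T : ℝ, ∀ t, T ≤ t → c t ∉ K

/-- The length of a curve with respect to the conformal density `lam`. -/
noncomputable def curveLength (lam : ℂ → ℝ) (c : ℝ → ℂ) : ENNReal :=
  ∫⁻ t in Set.Ici (0 : ℝ), ENNReal.ofReal (lam (c t) * ‖deriv c t‖)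

/-- A conformal metric `lam(z)²|dz|²` on `U` is complete if every differentiable divergent
curve in `U` has infinite length. -/
def IsCompleteConformalMetric (U : Set ℂ) (lam : ℂ → ℝ) : Prop :=
  ∀ c : ℝ → ℂ, IsDivergentCurve U c → (∀ t, 0 ≤ t → DifferentiableAt ℝ c t) →
    curveLength lam c = ⊤

/-!
The density is `(1 + |z|²)ⁿ / |P z|` on `{P ≠ 0}`, where `n = m / 2` and
`P = z ∏ (z - αᵢ)(αᵢ z - 1)` has degree `2n + 1`. For any `P` of degree at most `2n + 1`, the
exhaustion function
`h = (2n + 2) log (1 + |z|²) - log |P z|²` of `{P ≠ 0}` tends to `+∞` at the zeros of `P` and, by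
the degree bound, at `∞`. Its gradient is at most `4(n + 1)|z|/(1 + |z|²) + 2|P'/P|`, which is
`O((1 + |z|²)ⁿ / |P z|)`. Hence along a divergent curve `h` is unbounded while its increase is at
most a constant times the length of the curve.
-/

open MeasureTheory Polynomial

lemma pow_le_one_add_sq_pow {x : ℝ} (hx : 0 ≤ x) {k n : ℕ} (h : k ≤ 2 * n) :
    x ^ k ≤ (1 + x ^ 2) ^ n := by
  rcases le_total x 1 with hx1 | hx1
  · calc x ^ k ≤ 1 := pow_le_one₀ hx hx1
      _ ≤ (1 + x ^ 2) ^ n := one_le_pow₀ (by nlinarith)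
  · calc x ^ k ≤ x ^ (2 * n) := pow_le_pow_right₀ hx1 h
      _ = (x ^ 2) ^ n := pow_mul x 2 n
      _ ≤ (1 + x ^ 2) ^ n := by gcongr; linarith

theorem Polynomial.exists_norm_eval_le_mul_one_add_sq_pow {𝕜 : Type*} [NormedField 𝕜] (p : 𝕜[X])
    {n : ℕ} (hp : p.natDegree ≤ 2 * n) :
    ∃ C, 0 ≤ C ∧ ∀ z : 𝕜, ‖p.eval z‖ ≤ C * (1 + ‖z‖ ^ 2) ^ n := by
  refine ⟨∑ k ∈ Finset.range (p.natDegree + 1), ‖p.coeff k‖, by positivity, fun z => ?_⟩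
  rw [eval_eq_sum_range, Finset.sum_mul]
  refine (norm_sum_le _ _).trans (Finset.sum_le_sum fun k hk => ?_)
  rw [norm_mul, norm_pow]
  gcongr
  exact pow_le_one_add_sq_pow (norm_nonneg z) ((Finset.mem_range_succ_iff.mp hk).trans hp)

theorem enorm_sub_le_lintegral_enorm_deriv {E : Type*} [NormedAddCommGroup E] [NormedSpace ℝ E]
    [CompleteSpace E] {f : ℝ → E} {a b : ℝ} (hab : a ≤ b)
    (hf : ∀ t ∈ Icc a b, DifferentiableAt ℝ f t) :
    ‖f b - f a‖ₑ ≤ ∫⁻ t in Icc a b, ‖deriv f t‖ₑ := by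
  by_cases hfin : ∫⁻ t in Icc a b, ‖deriv f t‖ₑ = ⊤
  · exact hfin ▸ le_top
  have hint : IntegrableOn (deriv f) (Icc a b) :=
    ⟨(stronglyMeasurable_deriv f).aestronglyMeasurable, Ne.lt_top hfin⟩
  rw [← intervalIntegral.integral_eq_sub_of_hasDerivAt
    (fun t ht => (hf t (uIcc_of_le hab ▸ ht)).hasDerivAt)
    ((intervalIntegrable_iff_integrableOn_Icc_of_le hab).mpr hint),
    intervalIntegral.integral_of_le hab]
  exact (enorm_integral_le_lintegral_enorm _).trans (lintegral_mono_set Ioc_subset_Icc_self)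

theorem norm_fderiv_log_add_norm_sq_le {E F : Type*} [NormedAddCommGroup E] [NormedSpace ℝ E]
    [NormedAddCommGroup F] [InnerProductSpace ℝ F] {f : E → F} {z : E} {c : ℝ}
    (hf : DifferentiableAt ℝ f z) (hpos : 0 < c + ‖f z‖ ^ 2) :
    ‖fderiv ℝ (fun w => Real.log (c + ‖f w‖ ^ 2)) z‖ ≤
      2 * ‖f z‖ * ‖fderiv ℝ f z‖ / (c + ‖f z‖ ^ 2) := by
  rw [((hf.hasFDerivAt.norm_sq.const_add c).log hpos.ne').fderiv, norm_smul, norm_inv,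
    Real.norm_of_nonneg hpos.le, inv_mul_eq_div]
  gcongr
  calc ‖2 • (innerSL ℝ (f z)).comp (fderiv ℝ f z)‖
      ≤ 2 * (‖innerSL ℝ (f z)‖ * ‖fderiv ℝ f z‖) := by
        refine norm_nsmul_le.trans ?_
        push_cast
        gcongr
        exact ContinuousLinearMap.opNorm_comp_le _ _
    _ = 2 * ‖f z‖ * ‖fderiv ℝ f z‖ := by rw [innerSL_apply_norm, mul_assoc]

theorem IsCompleteConformalMetric.of_exhaustion {U : Set ℂ} {lam h : ℂ → ℝ} {C : ℝ} (hC : 0 ≤ C)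
    (hh : ∀ z ∈ U, DifferentiableAt ℝ h z ∧ ‖fderiv ℝ h z‖ ≤ C * lam z)
    (hproper : ∀ M, IsCompact {z ∈ U | h z ≤ M}) : IsCompleteConformalMetric U lam := by
  rintro c ⟨hcU, -, hdiv⟩ hc
  have hd : ∀ t, 0 ≤ t → HasDerivAt (h ∘ c) (fderiv ℝ h (c t) (deriv c t)) t :=
    fun t ht => (hh _ (hcU t ht)).1.hasFDerivAt.comp_hasDerivAt t (hc t ht).hasDerivAt
  have hgrowth : ∀ S, 0 ≤ S →
      ENNReal.ofReal (h (c S) - h (c 0)) ≤ ENNReal.ofReal C * curveLength lam c := by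
    intro S hS
    calc ENNReal.ofReal (h (c S) - h (c 0)) ≤ ‖(h ∘ c) S - (h ∘ c) 0‖ₑ := Real.ofReal_le_enorm _
      _ ≤ ∫⁻ t in Icc 0 S, ‖deriv (h ∘ c) t‖ₑ :=
          enorm_sub_le_lintegral_enorm_deriv hS fun t ht => (hd t ht.1).differentiableAt
      _ ≤ ∫⁻ t in Icc 0 S, ENNReal.ofReal C * ENNReal.ofReal (lam (c t) * ‖deriv c t‖) := by
          refine setLIntegral_mono' measurableSet_Icc fun t ht => ?_
          rw [(hd t ht.1).deriv, ← ENNReal.ofReal_mul hC, ← ofReal_norm]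
          refine ENNReal.ofReal_le_ofReal ?_
          calc _ ≤ ‖fderiv ℝ h (c t)‖ * ‖deriv c t‖ := ContinuousLinearMap.le_opNorm _ _
             _ ≤ _ := by
                rw [← mul_assoc]
                exact mul_le_mul_of_nonneg_right (hh _ (hcU t ht.1)).2 (norm_nonneg _)
      _ ≤ ∫⁻ t in Ici 0, ENNReal.ofReal C * ENNReal.ofReal (lam (c t) * ‖deriv c t‖) :=
          lintegral_mono_set Icc_subset_Ici_self
      _ = _ := lintegral_const_mul' _ _ ENNReal.ofReal_ne_top
  have hunbounded : ∀ M, ∃ S, 0 ≤ S ∧ M < h (c S) := by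
    intro M
    obtain ⟨T, hT⟩ := hdiv _ (fun z hz => hz.1) (hproper M)
    exact ⟨max T 0, le_max_right _ _, not_le.mp fun hle =>
      hT _ (le_max_left _ _) ⟨hcU _ (le_max_right _ _), hle⟩⟩
  have htop : ENNReal.ofReal C * curveLength lam c = ⊤ :=
    ENNReal.eq_top_of_forall_nnreal_le fun r => by
      obtain ⟨S, hS, hlt⟩ := hunbounded (h (c 0) + r)
      calc (r : ENNReal) = ENNReal.ofReal r := ENNReal.ofReal_coe_nnreal.symm
        _ ≤ ENNReal.ofReal (h (c S) - h (c 0)) := ENNReal.ofReal_le_ofReal (by linarith)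
        _ ≤ _ := hgrowth S hS
  exact (ENNReal.mul_eq_top.mp htop).elim And.right fun hC' => absurd hC'.1 ENNReal.ofReal_ne_top

noncomputable def polyExhaustion (P : ℂ[X]) (n : ℕ) (z : ℂ) : ℝ :=
  (2 * n + 2) * Real.log (1 + ‖z‖ ^ 2) - Real.log (‖P.eval z‖ ^ 2)

section polyExhaustion

variable (P : ℂ[X]) {n : ℕ}

theorem norm_fderiv_polynomial_eval (z : ℂ) :
    ‖fderiv ℝ (fun w => P.eval w) z‖ = ‖P.derivative.eval z‖ := by
  rw [P.differentiableAt.fderiv_restrictScalars ℝ, ContinuousLinearMap.norm_restrictScalars,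
    ← norm_deriv_eq_norm_fderiv, Polynomial.deriv]

theorem polyExhaustion_differentiableAt_and_norm_fderiv_le {z : ℂ} (hz : P.eval z ≠ 0) :
    DifferentiableAt ℝ (polyExhaustion P n) z ∧
      ‖fderiv ℝ (polyExhaustion P n) z‖ ≤
        (2 * n + 2) * (2 * ‖z‖ / (1 + ‖z‖ ^ 2)) + 2 * ‖P.derivative.eval z‖ / ‖P.eval z‖ := by
  have hs : 0 < 1 + ‖z‖ ^ 2 := by positivity
  have hPdiff : DifferentiableAt ℝ (fun w => P.eval w) z :=
    P.differentiableAt.restrictScalars ℝ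
  have hd₁ : DifferentiableAt ℝ (fun w : ℂ => Real.log (1 + ‖w‖ ^ 2)) z :=
    ((differentiableAt_id.norm_sq ℝ).const_add 1).log hs.ne'
  have hd₂ : DifferentiableAt ℝ (fun w => Real.log (‖P.eval w‖ ^ 2)) z :=
    (hPdiff.norm_sq ℝ).log (by positivity)
  have hb₁ : ‖fderiv ℝ (fun w : ℂ => Real.log (1 + ‖w‖ ^ 2)) z‖ ≤ 2 * ‖z‖ / (1 + ‖z‖ ^ 2) := by
    simpa using norm_fderiv_log_add_norm_sq_le differentiableAt_id hs
  have hb₂ : ‖fderiv ℝ (fun w => Real.log (‖P.eval w‖ ^ 2)) z‖ ≤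
      2 * ‖P.derivative.eval z‖ / ‖P.eval z‖ := by
    have := norm_fderiv_log_add_norm_sq_le (c := 0) hPdiff (by positivity)
    simp only [zero_add, norm_fderiv_polynomial_eval] at this
    refine this.trans_eq ?_
    field_simp
  have hdiff : DifferentiableAt ℝ (polyExhaustion P n) z := (hd₁.const_mul _).sub hd₂
  refine ⟨hdiff, ?_⟩
  unfold polyExhaustion
  rw [fderiv_fun_sub (hd₁.const_mul _) hd₂, fderiv_const_mul hd₁]
  refine (norm_sub_le _ _).trans (add_le_add ?_ hb₂)
  rw [norm_smul, Real.norm_of_nonneg (by positivity)]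
  gcongr

theorem exists_norm_fderiv_polyExhaustion_le (hP : P.natDegree ≤ 2 * n + 1) :
    ∃ C, 0 ≤ C ∧ ∀ z, P.eval z ≠ 0 → DifferentiableAt ℝ (polyExhaustion P n) z ∧
      ‖fderiv ℝ (polyExhaustion P n) z‖ ≤ C * ((1 + ‖z‖ ^ 2) ^ n * ‖(P.eval z)⁻¹‖) := by
  obtain ⟨C₁, hC₁0, hC₁⟩ := P.derivative.exists_norm_eval_le_mul_one_add_sq_pow (n := n)
    ((natDegree_derivative_le P).trans (by omega))
  obtain ⟨C₂, hC₂0, hC₂⟩ := (X * P).exists_norm_eval_le_mul_one_add_sq_pow (n := n + 1)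
    (natDegree_mul_le.trans (by linarith [natDegree_X_le (R := ℂ)]))
  refine ⟨(4 * n + 4) * C₂ + 2 * C₁, by positivity, fun z hz => ?_⟩
  obtain ⟨hdiff, hle⟩ := polyExhaustion_differentiableAt_and_norm_fderiv_le P (n := n) hz
  refine ⟨hdiff, hle.trans ?_⟩
  have hs : 0 < 1 + ‖z‖ ^ 2 := by positivity
  have hzP : ‖z‖ * ‖P.eval z‖ / (1 + ‖z‖ ^ 2) ≤ C₂ * (1 + ‖z‖ ^ 2) ^ n := by
    rw [div_le_iff₀ hs, mul_assoc, ← pow_succ, ← norm_mul]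
    simpa using hC₂ z
  calc (2 * n + 2) * (2 * ‖z‖ / (1 + ‖z‖ ^ 2)) + 2 * ‖P.derivative.eval z‖ / ‖P.eval z‖
      = ((4 * n + 4) * (‖z‖ * ‖P.eval z‖ / (1 + ‖z‖ ^ 2)) + 2 * ‖P.derivative.eval z‖) /
          ‖P.eval z‖ := by
        field_simp
        ring
    _ ≤ ((4 * n + 4) * (C₂ * (1 + ‖z‖ ^ 2) ^ n) + 2 * (C₁ * (1 + ‖z‖ ^ 2) ^ n)) / ‖P.eval z‖ := by
        gcongr
        exact hC₁ z
    _ = _ := by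
        rw [norm_inv]
        ring

theorem polyExhaustion_le_iff {z : ℂ} (hz : P.eval z ≠ 0) (M : ℝ) :
    polyExhaustion P n z ≤ M ↔ (1 + ‖z‖ ^ 2) ^ (2 * n + 2) ≤ Real.exp M * ‖P.eval z‖ ^ 2 := by
  have hPz : 0 < ‖P.eval z‖ ^ 2 := by positivity
  have hlog : polyExhaustion P n z = Real.log ((1 + ‖z‖ ^ 2) ^ (2 * n + 2) / ‖P.eval z‖ ^ 2) := by
    rw [Real.log_div (by positivity) hPz.ne', Real.log_pow, polyExhaustion]
    push_cast
    ring
  rw [hlog, Real.log_le_iff_le_exp (by positivity), div_le_iff₀ hPz]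

theorem isCompact_polyExhaustion_sublevel (hP : P.natDegree ≤ 2 * n + 1) (M : ℝ) :
    IsCompact {z ∈ {z | P.eval z ≠ 0} | polyExhaustion P n z ≤ M} := by
  have hsublevel : {z ∈ {z | P.eval z ≠ 0} | polyExhaustion P n z ≤ M} =
      {z | (1 + ‖z‖ ^ 2) ^ (2 * n + 2) ≤ Real.exp M * ‖P.eval z‖ ^ 2} := by
    ext z
    simp only [Set.mem_ofPred_eq]
    refine ⟨fun ⟨hz, hle⟩ => (polyExhaustion_le_iff P hz M).mp hle, fun hle => ?_⟩
    have hz : P.eval z ≠ 0 := by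
      rintro h0
      rw [h0, norm_zero, zero_pow two_ne_zero, mul_zero] at hle
      exact not_le.mpr (by positivity) hle
    exact ⟨hz, (polyExhaustion_le_iff P hz M).mpr hle⟩
  obtain ⟨C, -, hC⟩ := (P * P).exists_norm_eval_le_mul_one_add_sq_pow (n := 2 * n + 1)
    (natDegree_mul_le.trans (by omega))
  rw [hsublevel]
  refine Metric.isCompact_of_isClosed_isBounded (isClosed_le (by fun_prop) (by fun_prop))
    (isBounded_iff_forall_norm_le.mpr ⟨Real.exp M * C, fun z hz => ?_⟩)
  have hsq : ‖P.eval z‖ ^ 2 ≤ C * (1 + ‖z‖ ^ 2) ^ (2 * n + 1) := by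
    simpa [sq] using hC z
  have : (1 + ‖z‖ ^ 2) * (1 + ‖z‖ ^ 2) ^ (2 * n + 1) ≤
      Real.exp M * C * (1 + ‖z‖ ^ 2) ^ (2 * n + 1) := by
    rw [← pow_succ', mul_assoc]
    exact hz.trans (mul_le_mul_of_nonneg_left hsq (Real.exp_pos M).le)
  have := le_of_mul_le_mul_right this (by positivity)
  nlinarith [sq_nonneg (‖z‖ - 1)]

end polyExhaustion

theorem isCompleteConformalMetric_of_natDegree_le (P : ℂ[X]) {n : ℕ}
    (hP : P.natDegree ≤ 2 * n + 1) :
    IsCompleteConformalMetric {z | P.eval z ≠ 0} fun z => (1 + ‖z‖ ^ 2) ^ n * ‖(P.eval z)⁻¹‖ := by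
  obtain ⟨C, hC, hgrad⟩ := exists_norm_fderiv_polyExhaustion_le P hP
  exact .of_exhaustion hC hgrad (isCompact_polyExhaustion_sublevel P hP)

theorem example_metric_complete_general
    (m : ℕ)
    (α : Fin (m / 2) → ℂ) :
    IsCompleteConformalMetric
      {z : ℂ | z ≠ 0 ∧ ∀ i, z ≠ α i ∧ z ≠ (α i)⁻¹}
      (fun z => (1 + ‖z‖ ^ 2) ^ (m / 2) *
        ‖(z * ∏ i, ((z - α i) * (α i * z - 1)))⁻¹‖) := by
  set P : ℂ[X] := X * ∏ i, (X - C (α i)) * (C (α i) * X - 1)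
  have heval (z : ℂ) : P.eval z = z * ∏ i, ((z - α i) * (α i * z - 1)) := by simp [P, eval_prod]
  have hdeg : P.natDegree ≤ 2 * (m / 2) + 1 := by
    have hfactor (i : Fin (m / 2)) : ((X - C (α i)) * (C (α i) * X - 1)).natDegree ≤ 2 := by
      compute_degree
    have hprod := (natDegree_prod_le _ _).trans
      (Finset.sum_le_card_nsmul Finset.univ _ 2 fun i _ => hfactor i)
    simp only [Finset.card_univ, Fintype.card_fin, smul_eq_mul] at hprod
    linarith [natDegree_mul_le (p := (X : ℂ[X])) (q := ∏ i, (X - C (α i)) * (C (α i) * X - 1)),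
      natDegree_X_le (R := ℂ)]
  have hU : {z : ℂ | z ≠ 0 ∧ ∀ i, z ≠ α i ∧ z ≠ (α i)⁻¹} = {z | P.eval z ≠ 0} := by
    ext z
    simp only [Set.mem_ofPred_eq, ne_eq, heval, mul_ne_zero_iff, Finset.prod_ne_zero_iff,
      Finset.mem_univ, forall_const, sub_ne_zero]
    refine and_congr_right fun hz => forall_congr' fun i => and_congr_right' ?_
    rw [mul_eq_one_iff_eq_inv₀ hz, eq_comm, inv_eq_iff_eq_inv]
  simp_rw [hU, ← heval]
  exact isCompleteConformalMetric_of_natDegree_le P hdeg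

/-- the metric `ds² = (1+|g|²)^m |ω|²` of Example 1, with `g(z) = z` and
`ω = dz/(z ∏ (z − αᵢ)(αᵢ z − 1))` on `ℂ ∖ ({0} ∪ {αᵢ} ∪ {1/αᵢ})`, is complete. -/
theorem example_metric_complete
    (m : ℕ) (hm : Even m) (hm2 : 2 ≤ m)
    (α : Fin (m / 2) → ℂ) (hinj : Function.Injective α)
    (h0 : ∀ i, α i ≠ 0 ∧ α i ≠ 1 ∧ α i ≠ -1)
    (hinv : ∀ i j, α i ≠ (α j)⁻¹) :
    IsCompleteConformalMetric
      {z : ℂ | z ≠ 0 ∧ ∀ i, z ≠ α i ∧ z ≠ (α i)⁻¹}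
      (fun z => (1 + ‖z‖ ^ 2) ^ (m / 2) *
        ‖(z * ∏ i, ((z - α i) * (α i * z - 1)))⁻¹‖) :=
  example_metric_complete_general m α
end

section
/- On ℂ there exists no conformal pseudo-metric du² = μ²|dz|² with μ continuous, positive on a nonempty open set, and with Gaussian curvature bounded above by a negative constant on {μ > 0}; in particular a metric with strictly negative curvature bounded away from 0 cannot exist on all of ℂ. -/
/-!
Ahlfors' argument. Around a point `z₀` with `μ z₀ > 0`, the product of `μ` with the weight
`R² - |z - z₀|²` attains its maximum over the closed disc of radius `R` at an interior point `z₁`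
where `μ > 0`. There `log μ + log (R² - |z - z₀|²)` has a local maximum, so its Laplacian is
`≤ 0`; as `Δ log (R² - |z - z₀|²) = -4R² / (R² - |z - z₀|²)²`, the curvature bound gives
`c (μ z₁ (R² - |z₁ - z₀|²))² ≤ 4R²`, hence `c (μ z₀ R)² ≤ 4`, which fails for large `R`.
-/

/-- The Laplacian `Δf = ∂²f/∂x² + ∂²f/∂y²` of a function `f : ℂ → ℝ`. -/
noncomputable def laplacian (f : ℂ → ℝ) (z : ℂ) : ℝ :=
  fderiv ℝ (fun w => fderiv ℝ f w 1) z 1 +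
    fderiv ℝ (fun w => fderiv ℝ f w Complex.I) z Complex.I

open Filter Topology
open scoped Laplacian

theorem IsLocalMax.deriv_deriv_nonpos {f : ℝ → ℝ} {x₀ : ℝ} (h : IsLocalMax f x₀)
    (hc : ContinuousAt f x₀) : deriv (deriv f) x₀ ≤ 0 := by
  by_contra! hpos
  have hmin := isLocalMin_of_deriv_deriv_pos hpos h.deriv_eq_zero hc
  have hconst : f =ᶠ[𝓝 x₀] fun _ => f x₀ := by
    filter_upwards [h, hmin] with x hle hge using le_antisymm hle hge
  have hderiv : deriv f =ᶠ[𝓝 x₀] fun _ => 0 := by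
    filter_upwards [hconst.eventuallyEq_nhds] with x hx
    rw [hx.deriv_eq, deriv_const]
  rw [hderiv.deriv_eq, deriv_const] at hpos
  exact lt_irrefl 0 hpos

section LineRestriction

variable {E : Type*} [NormedAddCommGroup E] [NormedSpace ℝ E]

theorem ContDiffAt.fderiv_fderiv_apply_eq_deriv_deriv_line {g : E → ℝ} {z : E}
    (hg : ContDiffAt ℝ 2 g z) (v : E) :
    fderiv ℝ (fun w => fderiv ℝ g w v) z v = deriv (deriv fun t : ℝ => g (z + t • v)) 0 := by
  have hline : ∀ t : ℝ, HasDerivAt (fun t : ℝ => z + t • v) v t := fun t => by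
    simpa using ((hasDerivAt_id t).smul_const v).const_add z
  have hline_tendsto : Tendsto (fun t : ℝ => z + t • v) (𝓝 0) (𝓝 z) := by
    simpa using ((hline 0).continuousAt).tendsto
  have hdiff : ∀ᶠ t in 𝓝 (0 : ℝ), DifferentiableAt ℝ g (z + t • v) :=
    hline_tendsto.eventually <| (hg.eventually (by simp)).mono fun w hw =>
      hw.differentiableAt (by simp)
  have hfderiv : DifferentiableAt ℝ (fun w => fderiv ℝ g w v) z :=
    ((hg.fderiv_right (m := 1) le_rfl).differentiableAt one_ne_zero).clm_apply
      (differentiableAt_const v)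
  have hderiv : deriv (fun t : ℝ => g (z + t • v)) =ᶠ[𝓝 0]
      fun t => fderiv ℝ g (z + t • v) v := by
    filter_upwards [hdiff] with t ht
    exact (ht.hasFDerivAt.comp_hasDerivAt t (hline t)).deriv
  rw [hderiv.deriv_eq]
  exact (hfderiv.hasFDerivAt.comp_hasDerivAt_of_eq 0 (hline 0) (by simp)).deriv.symm

theorem IsLocalMax.fderiv_fderiv_apply_nonpos {g : E → ℝ} {z : E} (h : IsLocalMax g z)
    (hg : ContDiffAt ℝ 2 g z) (v : E) : fderiv ℝ (fun w => fderiv ℝ g w v) z v ≤ 0 := by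
  have hline : ContinuousAt (fun t : ℝ => z + t • v) 0 := by fun_prop
  have hz : z + (0 : ℝ) • v = z := by simp
  rw [hg.fderiv_fderiv_apply_eq_deriv_deriv_line]
  exact IsLocalMax.deriv_deriv_nonpos ((hz.symm ▸ h : IsLocalMax g _).comp_continuous hline)
    (hg.continuousAt.comp_of_eq hline hz)

end LineRestriction

theorem ContDiffAt.laplacian_eq {f : ℂ → ℝ} {z : ℂ} (hf : ContDiffAt ℝ 2 f z) :
    laplacian f z = Δ f z := by
  have hd : DifferentiableAt ℝ (fderiv ℝ f) z :=
    (hf.fderiv_right (m := 1) le_rfl).differentiableAt one_ne_zero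
  simp [laplacian, InnerProductSpace.laplacian_eq_iteratedFDeriv_complexPlane,
    iteratedFDeriv_two_apply, fderiv_clm_apply hd (differentiableAt_const _)]

theorem laplacian_add_of_contDiffAt {f g : ℂ → ℝ} {z : ℂ} (hf : ContDiffAt ℝ 2 f z)
    (hg : ContDiffAt ℝ 2 g z) :
    laplacian (fun w => f w + g w) z = laplacian f z + laplacian g z := by
  rw [(hf.add hg).laplacian_eq, hf.laplacian_eq, hg.laplacian_eq, ← hf.laplacian_add hg]
  rfl

theorem IsLocalMax.laplacian_nonpos {f : ℂ → ℝ} {z : ℂ} (h : IsLocalMax f z)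
    (hf : ContDiffAt ℝ 2 f z) : laplacian f z ≤ 0 :=
  add_nonpos (h.fderiv_fderiv_apply_nonpos hf 1) (h.fderiv_fderiv_apply_nonpos hf Complex.I)

theorem deriv_deriv_log_sub_sq {a b : ℝ} (h : b ^ 2 < a) :
    deriv (deriv fun t : ℝ => Real.log (a - (b + t) ^ 2)) 0 =
      -2 * (a + b ^ 2) / (a - b ^ 2) ^ 2 := by
  have hne : a - b ^ 2 ≠ 0 := (sub_pos.mpr h).ne'
  have hq : ∀ t : ℝ, HasDerivAt (fun t : ℝ => a - (b + t) ^ 2) (-2 * (b + t)) t := fun t =>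
    ((((hasDerivAt_id t).const_add b).pow 2).const_sub a).congr_deriv (by simp)
  have hpos : ∀ᶠ t in 𝓝 (0 : ℝ), 0 < a - (b + t) ^ 2 :=
    (continuous_const.sub ((continuous_const.add continuous_id).pow 2)).continuousAt.eventually
      (eventually_gt_nhds (by simpa using sub_pos.mpr h))
  have hderiv : deriv (fun t : ℝ => Real.log (a - (b + t) ^ 2)) =ᶠ[𝓝 0]
      fun t => -2 * (b + t) / (a - (b + t) ^ 2) := by
    filter_upwards [hpos] with t ht
    exact ((hq t).log ht.ne').deriv
  have hnum : HasDerivAt (fun t : ℝ => -2 * (b + t)) (-2) 0 :=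
    (((hasDerivAt_id (0 : ℝ)).const_add b).const_mul (-2)).congr_deriv (by simp)
  have hquot : HasDerivAt (fun t => -2 * (b + t) / (a - (b + t) ^ 2))
      ((-2 * (a - (b + 0) ^ 2) - -2 * (b + 0) * (-2 * (b + 0))) / (a - (b + 0) ^ 2) ^ 2) 0 :=
    hnum.div (hq 0) (by simpa using hne)
  rw [hderiv.deriv_eq, hquot.deriv, add_zero]
  field_simp
  ring

/-- `(2R / diskWeight z₀ R z)² |dz|²` is the Poincaré metric of curvature `-1` on the disc. -/
noncomputable def diskWeight (z₀ : ℂ) (R : ℝ) (w : ℂ) : ℝ := R ^ 2 - ‖w - z₀‖ ^ 2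

section DiskWeight

variable {z₀ w : ℂ} {R : ℝ}

theorem contDiff_diskWeight {n : WithTop ℕ∞} : ContDiff ℝ n (diskWeight z₀ R) :=
  contDiff_const.sub ((contDiff_norm_sq ℝ).comp (contDiff_id.sub contDiff_const))

theorem diskWeight_pos_iff (hR : 0 ≤ R) : 0 < diskWeight z₀ R w ↔ w ∈ Metric.ball z₀ R := by
  rw [diskWeight, sub_pos, Metric.mem_ball, dist_eq_norm,
    pow_lt_pow_iff_left₀ (norm_nonneg _) hR two_ne_zero]

theorem diskWeight_nonneg (hw : w ∈ Metric.closedBall z₀ R) : 0 ≤ diskWeight z₀ R w := by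
  rw [Metric.mem_closedBall, dist_eq_norm] at hw
  exact sub_nonneg.mpr (pow_le_pow_left₀ (norm_nonneg _) hw 2)

theorem laplacian_log_diskWeight (hw : 0 < diskWeight z₀ R w) :
    laplacian (fun z => Real.log (diskWeight z₀ R z)) w =
      -4 * R ^ 2 / diskWeight z₀ R w ^ 2 := by
  have hlog : ContDiffAt ℝ 2 (fun z => Real.log (diskWeight z₀ R z)) w :=
    contDiff_diskWeight.contDiffAt.log hw.ne'
  set A := (w - z₀).re
  set B := (w - z₀).im
  have hweight : diskWeight z₀ R w = R ^ 2 - A ^ 2 - B ^ 2 := by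
    rw [diskWeight, Complex.sq_norm, Complex.normSq_apply]
    ring
  have hline_re : (fun t : ℝ => Real.log (diskWeight z₀ R (w + t • (1 : ℂ)))) =
      fun t => Real.log ((R ^ 2 - B ^ 2) - (A + t) ^ 2) := by
    funext t
    rw [diskWeight, Complex.sq_norm, Complex.normSq_apply]
    simp only [Complex.real_smul, mul_one, Complex.sub_re, Complex.add_re, Complex.ofReal_re,
      Complex.sub_im, Complex.add_im, Complex.ofReal_im, add_zero, A, B]
    congr 1
    ring
  have hline_im : (fun t : ℝ => Real.log (diskWeight z₀ R (w + t • Complex.I))) =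
      fun t => Real.log ((R ^ 2 - A ^ 2) - (B + t) ^ 2) := by
    funext t
    rw [diskWeight, Complex.sq_norm, Complex.normSq_apply]
    simp only [Complex.real_smul, Complex.sub_re, Complex.add_re, Complex.mul_re,
      Complex.ofReal_re, Complex.I_re, mul_zero, Complex.ofReal_im, Complex.I_im, mul_one,
      sub_self, add_zero, Complex.sub_im, Complex.add_im, Complex.mul_im, A, B]
    congr 1
    ring
  rw [laplacian, hlog.fderiv_fderiv_apply_eq_deriv_deriv_line,
    hlog.fderiv_fderiv_apply_eq_deriv_deriv_line, hline_re, hline_im,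
    deriv_deriv_log_sub_sq (by linarith), deriv_deriv_log_sub_sq (by linarith), hweight]
  rw [show R ^ 2 - B ^ 2 - A ^ 2 = R ^ 2 - A ^ 2 - B ^ 2 by ring, ← add_div]
  ring

end DiskWeight

section AhlforsSchwarz

variable {μ : ℂ → ℝ} {z₀ : ℂ} {R c : ℝ}

theorem exists_isLocalMax_log_add_log_diskWeight (hμ : Continuous μ) (hz₀ : 0 < μ z₀)
    (hR : 0 < R) :
    ∃ z₁, 0 < μ z₁ ∧ 0 < diskWeight z₀ R z₁ ∧ μ z₀ * R ^ 2 ≤ μ z₁ * diskWeight z₀ R z₁ ∧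
      IsLocalMax (fun w => Real.log (μ w) + Real.log (diskWeight z₀ R w)) z₁ := by
  have hcont : Continuous fun w => μ w * diskWeight z₀ R w :=
    hμ.mul (contDiff_diskWeight (n := 0)).continuous
  obtain ⟨z₁, hz₁, hmax⟩ := (isCompact_closedBall z₀ R).exists_isMaxOn
    (Metric.nonempty_closedBall.mpr hR.le) hcont.continuousOn
  have hcenter : μ z₀ * R ^ 2 ≤ μ z₁ * diskWeight z₀ R z₁ := by
    simpa [diskWeight] using hmax (Metric.mem_closedBall_self hR.le)
  have hprod : 0 < μ z₁ * diskWeight z₀ R z₁ :=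
    (by positivity : 0 < μ z₀ * R ^ 2).trans_le hcenter
  have hweight : 0 < diskWeight z₀ R z₁ :=
    (diskWeight_nonneg hz₁).lt_of_ne fun h => by simp [← h] at hprod
  have hμz₁ : 0 < μ z₁ := pos_of_mul_pos_left hprod hweight.le
  refine ⟨z₁, hμz₁, hweight, hcenter, ?_⟩
  filter_upwards [Metric.isOpen_ball.mem_nhds ((diskWeight_pos_iff hR.le).mp hweight),
    (isOpen_lt continuous_const hμ).mem_nhds hμz₁] with w hw (hμw : 0 < μ w)
  have hww : 0 < diskWeight z₀ R w := (diskWeight_pos_iff hR.le).mpr hw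
  rw [← Real.log_mul hμw.ne' hww.ne', ← Real.log_mul hμz₁.ne' hweight.ne']
  exact Real.log_le_log (mul_pos hμw hww) (hmax (Metric.ball_subset_closedBall hw))

theorem sq_mul_diskWeight_le_of_isLocalMax {z₁ : ℂ}
    (hlog : ContDiffAt ℝ 2 (fun w => Real.log (μ w)) z₁) (hweight : 0 < diskWeight z₀ R z₁)
    (hmax : IsLocalMax (fun w => Real.log (μ w) + Real.log (diskWeight z₀ R w)) z₁)
    (hcurv : c * μ z₁ ^ 2 ≤ laplacian (fun w => Real.log (μ w)) z₁) :
    c * (μ z₁ * diskWeight z₀ R z₁) ^ 2 ≤ 4 * R ^ 2 := by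
  have hlog_weight : ContDiffAt ℝ 2 (fun w => Real.log (diskWeight z₀ R w)) z₁ :=
    contDiff_diskWeight.contDiffAt.log hweight.ne'
  have hsum := hmax.laplacian_nonpos (hlog.add hlog_weight)
  rw [laplacian_add_of_contDiffAt hlog hlog_weight, laplacian_log_diskWeight hweight, neg_mul,
    neg_div, ← sub_eq_add_neg, sub_nonpos] at hsum
  have hbound := hcurv.trans hsum
  rwa [le_div_iff₀ (by positivity), mul_assoc, ← mul_pow] at hbound

theorem mul_sq_le_four_of_curvature_le (hμ : Continuous μ)
    (hlog : ContDiffOn ℝ 2 (fun z => Real.log (μ z)) {z | 0 < μ z})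
    (hcurv : ∀ z, 0 < μ z → -(laplacian (fun w => Real.log (μ w)) z) / (μ z) ^ 2 ≤ -c)
    (hc : 0 ≤ c) (hz₀ : 0 < μ z₀) (hR : 0 < R) : c * (μ z₀ * R) ^ 2 ≤ 4 := by
  obtain ⟨z₁, hμz₁, hweight, hcenter, hmax⟩ :=
    exists_isLocalMax_log_add_log_diskWeight hμ hz₀ hR
  have hcurv₁ : c * μ z₁ ^ 2 ≤ laplacian (fun w => Real.log (μ w)) z₁ := by
    have := hcurv z₁ hμz₁
    rw [div_le_iff₀ (by positivity)] at this
    linarith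
  have hlog₁ : ContDiffAt ℝ 2 (fun w => Real.log (μ w)) z₁ :=
    hlog.contDiffAt ((isOpen_lt continuous_const hμ).mem_nhds hμz₁)
  have hbound := sq_mul_diskWeight_le_of_isLocalMax hlog₁ hweight hmax hcurv₁
  refine le_of_mul_le_mul_right ?_ (by positivity : 0 < R ^ 2)
  calc c * (μ z₀ * R) ^ 2 * R ^ 2 = c * (μ z₀ * R ^ 2) ^ 2 := by ring
    _ ≤ c * (μ z₁ * diskWeight z₀ R z₁) ^ 2 := by gcongr
    _ ≤ 4 * R ^ 2 := hbound

end AhlforsSchwarz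

/-- there is no conformal pseudo-metric `du² = μ²|dz|²` on all of `ℂ` with
`μ` continuous and nonnegative, positive on some nonempty open set, smooth where positive,
whose Gaussian curvature `−(Δ log μ)/μ²` is bounded above by a negative constant on
`{μ > 0}`. -/
theorem no_pseudo_metric_with_strictly_negative_curvature (c : ℝ) (hc : 0 < c) :
    ¬ ∃ μ : ℂ → ℝ, Continuous μ ∧ (∀ z, 0 ≤ μ z) ∧
      (∃ V : Set ℂ, IsOpen V ∧ V.Nonempty ∧ ∀ z ∈ V, 0 < μ z) ∧
      ContDiffOn ℝ 2 (fun z => Real.log (μ z)) {z : ℂ | 0 < μ z} ∧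
      (∀ z, 0 < μ z →
        -(laplacian (fun w => Real.log (μ w)) z) / (μ z) ^ 2 ≤ -c) := by
  rintro ⟨μ, hμ, -, ⟨V, -, ⟨z₀, hz₀V⟩, hV⟩, hlog, hcurv⟩
  have hz₀ : 0 < μ z₀ := hV z₀ hz₀V
  set R := Real.sqrt (5 / (c * μ z₀ ^ 2))
  have hR : 0 < R := Real.sqrt_pos.mpr (by positivity)
  have hbound := mul_sq_le_four_of_curvature_le hμ hlog hcurv hc.le hz₀ hR
  have hR_sq : c * (μ z₀ * R) ^ 2 = 5 := by
    rw [mul_pow, Real.sq_sqrt (by positivity)]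
    field_simp
  linarith
end
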